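/- Let d₁, d₂ be positive integers with d₁ ∣ d₂, d₁ ≡ 2 (mod 4) and d₂ ≡ 2 (mod 4), and set n := d₁·d₂ (so n/4 is an odd integer). In M = (ZMod n)⁴ with the standard symplectic form ω, let K be the subgroup generated by (n/2)·e₁' and (n/2)·f₁'. Then K^⊥ is the subgroup generated by 2·e₁', 2·f₁', e₂', f₂', and the quotient K^⊥/K is isomorphic as an abelian group to ZMod (n/4) × ZMod (n/4) × ZMod n × ZMod n, which (since n/4 is odd) is in turn isomorphic to (ZMod (n/4))⁴ × ZMod 4 × ZMod 4. -/
import Mathlib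


/-- The group `A[n]` of `n`-torsion points of a principally polarized abelian surface,
modelled as `(ZMod n)⁴`, with coordinates ordered `(e₁', e₂', f₁', f₂')`. -/
abbrev M (n : ℕ) : Type := ZMod n × ZMod n × ZMod n × ZMod n

/-- The standard generator `e₁'`. -/
def e₁' (n : ℕ) : M n := (1, 0, 0, 0)
/-- The standard generator `e₂'`. -/
def e₂' (n : ℕ) : M n := (0, 1, 0, 0)
/-- The standard generator `f₁'`. -/
def f₁' (n : ℕ) : M n := (0, 0, 1, 0)
/-- The standard generator `f₂'`. -/
def f₂' (n : ℕ) : M n := (0, 0, 0, 1)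

/-- The standard symplectic form on `(ZMod n)⁴`: the biadditive alternating form with
`ω(e₁',f₁') = ω(e₂',f₂') = 1` and vanishing on the other pairs of standard generators. -/
def sympForm (n : ℕ) (x y : M n) : ZMod n :=
  x.1 * y.2.2.1 + x.2.1 * y.2.2.2 - x.2.2.1 * y.1 - x.2.2.2 * y.2.1

/-- A subgroup `G` is isotropic if the symplectic form vanishes identically on `G × G`. -/
def IsIsotropic (n : ℕ) (G : AddSubgroup (M n)) : Prop :=
  ∀ g ∈ G, ∀ h ∈ G, sympForm n g h = 0

lemma sympForm_add_left (n : ℕ) (a b g : M n) :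
    sympForm n (a + b) g = sympForm n a g + sympForm n b g := by
  simp only [sympForm, Prod.fst_add, Prod.snd_add]; ring

lemma sympForm_neg_left (n : ℕ) (a g : M n) :
    sympForm n (-a) g = -sympForm n a g := by
  simp only [sympForm, Prod.fst_neg, Prod.snd_neg]; ring

/-- The orthogonal complement `G^⊥` of a subgroup `G` with respect to the symplectic form. -/
def perp (n : ℕ) (G : AddSubgroup (M n)) : AddSubgroup (M n) where
  carrier := {x | ∀ g ∈ G, sympForm n x g = 0}
  zero_mem' := by intro g _; simp [sympForm]
  add_mem' := by
    intro a b ha hb g hg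
    rw [sympForm_add_left, ha g hg, hb g hg, add_zero]
  neg_mem' := by
    intro a ha g hg
    rw [sympForm_neg_left, ha g hg, neg_zero]

-- new helpers
lemma sympForm_add_right (n : ℕ) (a g h : M n) :
    sympForm n a (g + h) = sympForm n a g + sympForm n a h := by
  simp only [sympForm, Prod.fst_add, Prod.snd_add]; ring
lemma sympForm_neg_right (n : ℕ) (a g : M n) :
    sympForm n a (-g) = -sympForm n a g := by
  simp only [sympForm, Prod.fst_neg, Prod.snd_neg]; ring
lemma sympForm_zero_right (n : ℕ) (a : M n) : sympForm n a 0 = 0 := by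
  simp [sympForm]

lemma mem_perp_closure (n : ℕ) (T : Set (M n)) (x : M n) :
    x ∈ perp n (AddSubgroup.closure T) ↔ ∀ t ∈ T, sympForm n x t = 0 := by
  constructor
  · exact fun h t ht => h t (AddSubgroup.subset_closure ht)
  · intro h g hg
    refine AddSubgroup.closure_induction (fun t ht => h t ht) (sympForm_zero_right n x)
      (fun a b _ _ ha hb => by rw [sympForm_add_right, ha, hb, add_zero])
      (fun a _ ha => by rw [sympForm_neg_right, ha, neg_zero]) hg

lemma smul_e₁' (n k : ℕ) : k • e₁' n = ((k : ZMod n), 0, 0, 0) := by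
  simp [e₁', Prod.smul_mk, nsmul_eq_mul]
lemma smul_e₂' (n k : ℕ) : k • e₂' n = (0, (k : ZMod n), 0, 0) := by
  simp [e₂', Prod.smul_mk, nsmul_eq_mul]
lemma smul_f₁' (n k : ℕ) : k • f₁' n = (0, 0, (k : ZMod n), 0) := by
  simp [f₁', Prod.smul_mk, nsmul_eq_mul]
lemma smul_f₂' (n k : ℕ) : k • f₂' n = (0, 0, 0, (k : ZMod n)) := by
  simp [f₂', Prod.smul_mk, nsmul_eq_mul]

lemma dvd_of_mul_eq_zero (m : ℕ) (hm : 0 < m) (x : ZMod (4*m)) :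
    ((2*m : ℕ) : ZMod (4*m)) * x = 0 ↔ 2 ∣ x.val := by
  haveI : NeZero (4*m) := ⟨by omega⟩
  conv_lhs => rw [show x = ((x.val : ℕ) : ZMod (4*m)) by simp [ZMod.natCast_val]]
  rw [← Nat.cast_mul, ZMod.natCast_eq_zero_iff]
  constructor
  · rintro ⟨k, hk⟩
    have h2 : m * (2 * x.val) = m * (4 * k) := by linarith [hk]
    have := Nat.eq_of_mul_eq_mul_left hm h2
    omega
  · rintro ⟨k, hk⟩
    exact ⟨k, by rw [hk]; ring⟩

lemma hzero (m : ℕ) : ((2*m : ℕ) : ZMod (4*m)) * 2 = 0 := by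
  have : ((2*m : ℕ) : ZMod (4*m)) * 2 = ((4*m : ℕ) : ZMod (4*m)) := by push_cast; ring
  rw [this, ZMod.natCast_self]

lemma mem_perp_iff (m : ℕ) (hm : 0 < m) (K : AddSubgroup (M (4*m)))
    (hK : K = AddSubgroup.closure {(2*m) • e₁' (4*m), (2*m) • f₁' (4*m)}) (x : M (4*m)) :
    x ∈ perp (4*m) K ↔ 2 ∣ x.1.val ∧ 2 ∣ x.2.2.1.val := by
  rw [hK, mem_perp_closure]
  simp only [Set.mem_insert_iff, Set.mem_singleton_iff, forall_eq_or_imp, forall_eq,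
    smul_e₁', smul_f₁']
  rw [← dvd_of_mul_eq_zero m hm, ← dvd_of_mul_eq_zero m hm]
  simp only [sympForm]
  constructor
  · rintro ⟨h1, h2⟩
    constructor
    · linear_combination h2
    · linear_combination -h1
  · rintro ⟨h1, h2⟩
    constructor
    · linear_combination -h2
    · linear_combination h1

lemma part1 (m : ℕ) (hm : 0 < m) (K : AddSubgroup (M (4*m)))
    (hK : K = AddSubgroup.closure {(2*m) • e₁' (4*m), (2*m) • f₁' (4*m)}) :
    perp (4*m) K = AddSubgroup.closure
      {(2 : ℕ) • e₁' (4*m), (2 : ℕ) • f₁' (4*m), e₂' (4*m), f₂' (4*m)} := by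
  haveI : NeZero (4*m) := ⟨by omega⟩
  apply le_antisymm
  · intro x hx
    rw [mem_perp_iff m hm K hK] at hx
    obtain ⟨h1, h2⟩ := hx
    have hx1 : x = (x.1.val/2) • ((2:ℕ) • e₁' (4*m)) + x.2.1.val • e₂' (4*m)
        + (x.2.2.1.val/2) • ((2:ℕ) • f₁' (4*m)) + x.2.2.2.val • f₂' (4*m) := by
      rw [smul_smul, smul_smul, smul_e₁', smul_e₂', smul_f₁', smul_f₂',
        Nat.div_mul_cancel h1, Nat.div_mul_cancel h2]
      simp [Prod.ext_iff, ZMod.natCast_val]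
    rw [hx1]
    refine add_mem (add_mem (add_mem ?_ ?_) ?_) ?_ <;>
      exact nsmul_mem (AddSubgroup.subset_closure (by simp)) _
  · rw [AddSubgroup.closure_le]
    have hval : (((2:ℕ) : ZMod (4*m))).val = 2 := ZMod.val_natCast_of_lt (by omega)
    rintro g (rfl | rfl | rfl | rfl) <;>
      rw [SetLike.mem_coe, mem_perp_iff m hm K hK]
    · rw [smul_e₁']; exact ⟨⟨1, by rw [hval]⟩, by simp⟩
    · rw [smul_f₁']; exact ⟨by simp, ⟨1, by rw [hval]⟩⟩
    · simp [e₂']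
    · simp [f₂']

noncomputable def Fhom (m : ℕ) (hm2 : m % 2 = 1) :
    M (4*m) →+ ZMod m × ZMod m × ZMod (4*m) × ZMod (4*m) where
  toFun := fun x => ((((m+1)/2 : ℕ) : ZMod m) * ZMod.castHom (dvd_mul_left m 4) (ZMod m) x.1,
    (((m+1)/2 : ℕ) : ZMod m) * ZMod.castHom (dvd_mul_left m 4) (ZMod m) x.2.2.1,
    x.2.1, x.2.2.2)
  map_zero' := by simp
  map_add' := by
    intro x y
    simp [Prod.ext_iff, map_add, mul_add]

lemma two_mul_u (m : ℕ) (hm2 : m % 2 = 1) :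
    (2 : ZMod m) * (((m+1)/2 : ℕ) : ZMod m) = 1 := by
  have h1 : ((2*((m+1)/2) : ℕ) : ZMod m) = ((m+1 : ℕ) : ZMod m) := by congr 1; omega
  calc (2 : ZMod m) * (((m+1)/2 : ℕ) : ZMod m) = ((2*((m+1)/2) : ℕ) : ZMod m) := by
        push_cast; ring
    _ = ((m+1 : ℕ) : ZMod m) := h1
    _ = 1 := by push_cast [ZMod.natCast_self]; ring

lemma part2 (m : ℕ) (hm2 : m % 2 = 1) (K : AddSubgroup (M (4*m)))
    (hK : K = AddSubgroup.closure {(2*m) • e₁' (4*m), (2*m) • f₁' (4*m)}) :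
    Nonempty ((perp (4*m) K ⧸ K.addSubgroupOf (perp (4*m) K)) ≃+
      (ZMod m × ZMod m × ZMod (4*m) × ZMod (4*m))) := by
  have hm : 0 < m := by omega
  haveI : NeZero (4*m) := ⟨by omega⟩
  haveI : NeZero m := ⟨by omega⟩
  set u : ZMod m := (((m+1)/2 : ℕ) : ZMod m) with hu
  set c := ZMod.castHom (dvd_mul_left m 4) (ZMod m) with hc
  set F' := (Fhom m hm2).comp (perp (4*m) K).subtype with hF'
  have hFval : ∀ x : M (4*m), Fhom m hm2 x = (u * c x.1, u * c x.2.2.1, x.2.1, x.2.2.2) :=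
    fun x => rfl
  have heven : ∀ y : ZMod (4*m), 2 ∣ ((2:ZMod (4*m))*y).val := by
    intro y
    have h1 : (2:ZMod (4*m))*y = ((2*y.val : ℕ) : ZMod (4*m)) := by
      push_cast
      simp [ZMod.natCast_val]
    rw [h1, ZMod.val_natCast]
    exact (Nat.dvd_mod_iff ⟨2*m, by ring⟩).mpr ⟨y.val, rfl⟩
  have hc2 : c (2 : ZMod (4*m)) = 2 := by
    rw [show (2 : ZMod (4*m)) = ((2:ℕ) : ZMod (4*m)) by push_cast; rfl, map_natCast]
    push_cast; rfl
  have hsurj : Function.Surjective F' := by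
    rintro ⟨p, q, b, d⟩
    refine ⟨⟨(2*((p.val : ℕ) : ZMod (4*m)), b, 2*((q.val : ℕ) : ZMod (4*m)), d), ?_⟩, ?_⟩
    · rw [mem_perp_iff m hm K hK]
      exact ⟨heven _, heven _⟩
    · have key : ∀ p : ZMod m, u * c (2*((p.val : ℕ) : ZMod (4*m))) = p := by
        intro p
        rw [map_mul, hc2, map_natCast, ← mul_assoc, mul_comm u 2, two_mul_u m hm2, one_mul,
          ZMod.natCast_val, ZMod.cast_id]
      show (u * c (2*((p.val : ℕ) : ZMod (4*m))), u * c (2*((q.val : ℕ) : ZMod (4*m))), b, d)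
        = (p, q, b, d)
      rw [key p, key q]
  have hker : F'.ker = K.addSubgroupOf (perp (4*m) K) := by
    ext ⟨x, hx⟩
    rw [AddMonoidHom.mem_ker, AddSubgroup.mem_addSubgroupOf]
    have hFx : F' ⟨x, hx⟩ = Fhom m hm2 x := rfl
    rw [hFx, hFval, Prod.ext_iff, Prod.ext_iff, Prod.ext_iff]
    simp only [Prod.fst_zero, Prod.snd_zero]
    constructor
    · rintro ⟨ha, hcc, hb, hd⟩
      have hx2 := (mem_perp_iff m hm K hK x).mp hx
      have hdvd : ∀ y : ZMod (4*m), 2 ∣ y.val → u * c y = 0 → 2*m ∣ y.val := by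
        intro y h2y h0
        have hcy : c y = 0 := by
          have : (2 : ZMod m) * (u * c y) = c y := by
            rw [← mul_assoc, two_mul_u m hm2, one_mul]
          rw [h0, mul_zero] at this
          exact this.symm
        have hmy : m ∣ y.val := by
          have : c ((y.val : ℕ) : ZMod (4*m)) = ((y.val : ℕ) : ZMod m) := map_natCast c y.val
          rw [show ((y.val : ℕ) : ZMod (4*m)) = y by simp [ZMod.natCast_val]] at this
          rw [hcy] at this
          exact (ZMod.natCast_eq_zero_iff y.val m).mp this.symm
        have hcop : Nat.Coprime 2 m := (Nat.prime_two.coprime_iff_not_dvd).mpr (by omega)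
        exact hcop.mul_dvd_of_dvd_of_dvd h2y hmy
      have d1 : 2*m ∣ x.1.val := hdvd x.1 hx2.1 ha
      have d2 : 2*m ∣ x.2.2.1.val := hdvd x.2.2.1 hx2.2 hcc
      have hx1 : x = (x.1.val/(2*m)) • ((2*m) • e₁' (4*m))
          + (x.2.2.1.val/(2*m)) • ((2*m) • f₁' (4*m)) := by
        rw [smul_smul, smul_smul, smul_e₁', smul_f₁',
          Nat.div_mul_cancel d1, Nat.div_mul_cancel d2]
        simp [Prod.ext_iff, ZMod.natCast_val, hb, hd]
      rw [hK, hx1]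
      exact add_mem (nsmul_mem (AddSubgroup.subset_closure (by simp)) _)
        (nsmul_mem (AddSubgroup.subset_closure (by simp)) _)
    · intro hxK
      rw [hK] at hxK
      have hgen : ∀ g ∈ ({(2*m) • e₁' (4*m), (2*m) • f₁' (4*m)} : Set (M (4*m))),
          Fhom m hm2 g = 0 := by
        rintro g (rfl | rfl) <;>
          · rw [hFval]
            simp only [smul_e₁', smul_f₁']
            have : c ((2*m : ℕ) : ZMod (4*m)) = 0 := by
              rw [map_natCast, ZMod.natCast_eq_zero_iff]
              exact ⟨2, by ring⟩
            simp [this, Prod.ext_iff]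
      have h0 : Fhom m hm2 x = 0 := by
        refine AddSubgroup.closure_induction (fun g hg => hgen g hg) (map_zero _)
          (fun a b _ _ ha hb => by rw [map_add, ha, hb, add_zero])
          (fun a _ ha => by rw [map_neg, ha, neg_zero]) hxK
      rw [hFval] at h0
      rw [Prod.ext_iff, Prod.ext_iff, Prod.ext_iff] at h0
      exact ⟨h0.1, h0.2.1, h0.2.2.1, h0.2.2.2⟩
  rw [← hker]
  exact ⟨QuotientAddGroup.quotientKerEquivOfSurjective F' hsurj⟩

def shuffle (A B : Type) [AddGroup A] [AddGroup B] :
    (A × A × (A × B) × (A × B)) ≃+ ((A × A × A × A) × B × B) where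
  toFun := fun x => ((x.1, x.2.1, x.2.2.1.1, x.2.2.2.1), (x.2.2.1.2, x.2.2.2.2))
  invFun := fun y => (y.1.1, y.1.2.1, (y.1.2.2.1, y.2.1), (y.1.2.2.2, y.2.2))
  left_inv := fun _ => rfl
  right_inv := fun _ => rfl
  map_add' := fun _ _ => rfl

lemma part3 (m : ℕ) (hm2 : m % 2 = 1) :
    Nonempty ((ZMod m × ZMod m × ZMod (4*m) × ZMod (4*m)) ≃+
      ((ZMod m × ZMod m × ZMod m × ZMod m) × ZMod 4 × ZMod 4)) := by
  have hcop : Nat.Coprime m 4 := by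
    have h2 : Nat.Coprime m 2 := ((Nat.prime_two.coprime_iff_not_dvd).mpr (by omega)).symm
    rw [show (4:ℕ) = 2^2 from rfl]
    exact h2.pow_right 2
  have h4m : 4*m = m*4 := by ring
  let ez : ZMod (4*m) ≃+ ZMod m × ZMod 4 :=
    ((ZMod.ringEquivCongr h4m).trans (ZMod.chineseRemainder hcop)).toAddEquiv
  exact ⟨((AddEquiv.refl (ZMod m)).prodCongr ((AddEquiv.refl (ZMod m)).prodCongr
    (ez.prodCongr ez))).trans (shuffle (ZMod m) (ZMod 4))⟩

lemma combined (n m : ℕ) (hm2 : m % 2 = 1) (hn : n = 4*m) (K : AddSubgroup (M n))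
    (hK : K = AddSubgroup.closure {(n / 2) • e₁' n, (n / 2) • f₁' n}) :
    perp n K = AddSubgroup.closure
      {(2 : ℕ) • e₁' n, (2 : ℕ) • f₁' n, e₂' n, f₂' n} ∧
    Nonempty
      ((perp n K ⧸ K.addSubgroupOf (perp n K)) ≃+
        (ZMod (n / 4) × ZMod (n / 4) × ZMod n × ZMod n)) ∧
    Nonempty
      ((ZMod (n / 4) × ZMod (n / 4) × ZMod n × ZMod n) ≃+
        ((ZMod (n / 4) × ZMod (n / 4) × ZMod (n / 4) × ZMod (n / 4)) × ZMod 4 × ZMod 4)) := by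
  subst hn
  have hm : 0 < m := by omega
  rw [show 4*m/2 = 2*m from by omega] at hK
  rw [show 4*m/4 = m from by omega]
  exact ⟨part1 m hm K hK, part2 m hm2 K hK, part3 m hm2⟩

/-- The six Weierstrass 2-torsion elements `e₁, f₁, e₁+f₁, e₂, f₂, e₂+f₂`,
where `e₁ = (n/2)·e₁'`, etc. -/
def weierstrassSet (n : ℕ) : Set (M n) :=
  {(n / 2) • e₁' n, (n / 2) • f₁' n, (n / 2) • e₁' n + (n / 2) • f₁' n,
   (n / 2) • e₂' n, (n / 2) • f₂' n, (n / 2) • e₂' n + (n / 2) • f₂' n}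

/-- with `d₁ ≡ d₂ ≡ 2 (mod 4)` and `n = d₁d₂`, the subgroup
`K = ⟨(n/2)e₁', (n/2)f₁'⟩` has orthogonal complement `⟨2e₁', 2f₁', e₂', f₂'⟩`, and
`K^⊥/K ≅ ZMod (n/4) × ZMod (n/4) × ZMod n × ZMod n ≅ (ZMod (n/4))⁴ × ZMod 4 × ZMod 4`. -/
theorem stmt_4 (d₁ d₂ : ℕ) (hd₁ : 0 < d₁) (hd₂ : 0 < d₂) (hdvd : d₁ ∣ d₂)
    (h₁ : d₁ % 4 = 2) (h₂ : d₂ % 4 = 2)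
    (K : AddSubgroup (M (d₁ * d₂)))
    (hK : K = AddSubgroup.closure
      {((d₁ * d₂) / 2) • e₁' (d₁ * d₂), ((d₁ * d₂) / 2) • f₁' (d₁ * d₂)}) :
    perp (d₁ * d₂) K = AddSubgroup.closure
      {(2 : ℕ) • e₁' (d₁ * d₂), (2 : ℕ) • f₁' (d₁ * d₂), e₂' (d₁ * d₂), f₂' (d₁ * d₂)} ∧
    Nonempty
      ((perp (d₁ * d₂) K ⧸ K.addSubgroupOf (perp (d₁ * d₂) K)) ≃+
        (ZMod ((d₁ * d₂) / 4) × ZMod ((d₁ * d₂) / 4) × ZMod (d₁ * d₂) × ZMod (d₁ * d₂))) ∧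
    Nonempty
      ((ZMod ((d₁ * d₂) / 4) × ZMod ((d₁ * d₂) / 4) × ZMod (d₁ * d₂) × ZMod (d₁ * d₂)) ≃+
        ((ZMod ((d₁ * d₂) / 4) × ZMod ((d₁ * d₂) / 4) × ZMod ((d₁ * d₂) / 4) ×
          ZMod ((d₁ * d₂) / 4)) × ZMod 4 × ZMod 4)) := by
  obtain ⟨a, ha⟩ : ∃ a, d₁ = 4*a+2 := ⟨d₁/4, by omega⟩
  obtain ⟨b, hb⟩ : ∃ b, d₂ = 4*b+2 := ⟨d₂/4, by omega⟩
  exact combined (d₁*d₂) (4*a*b+2*a+2*b+1)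
    (by have h : 4*a*b+2*a+2*b+1 = 2*(2*a*b+a+b)+1 := by ring
        omega) (by subst ha hb; ring) K hK
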